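/- For every integer k ≥ 1 and each 1 ≤ l ≤ k, the map from [0,1) to B(H_k) sending q to the generator x_l(q) is continuous with respect to the operator norm. (This norm-continuity in the deformation parameter underlies the homotopy argument proving q-invariance of the extensions.) -/

import Mathlib

noncomputable section

/-- The Hilbert space `H_k = ℓ²(ℤ × ℕ^{k-1})`. -/
abbrev Hk (k : ℕ) : Type := lp (fun _ : ℤ × (Fin (k - 1) → ℕ) => ℂ) 2

/-- The canonical orthonormal basis vectors `e_{(m,a)}` of `H_k`. -/
noncomputable def ek (k : ℕ) (x : ℤ × (Fin (k - 1) → ℕ)) : Hk k := lp.single 2 x 1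

/-- The defining property of the generator
`x_l(q) = t ⊗ (q^N)^{⊗(l−1)} ⊗ √(1−q^{2N})S* ⊗ 1^{⊗(k−1−l)}` for `1 ≤ l ≤ k−1`
(here `l : Fin (k-1)`), with the convention `0⁰ = 1`. -/
def IsXl (k : ℕ) (q : ℝ) (l : Fin (k - 1)) (T : Hk k →L[ℂ] Hk k) : Prop :=
  ∀ (m : ℤ) (a : Fin (k - 1) → ℕ),
    T (ek k (m, a)) =
      ((q ^ (∑ i ∈ Finset.Iio l, a i) * Real.sqrt (1 - q ^ (2 * a l + 2)) : ℝ) : ℂ) •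
        ek k (m + 1, a + Pi.single l 1)

/-- The defining property of the top generator `x_k(q) = t ⊗ (q^N)^{⊗(k−1)}`. -/
def IsXtop (k : ℕ) (q : ℝ) (T : Hk k →L[ℂ] Hk k) : Prop :=
  ∀ (m : ℤ) (a : Fin (k - 1) → ℕ),
    T (ek k (m, a)) = ((q ^ (∑ i, a i) : ℝ) : ℂ) • ek k (m + 1, a)

/-- The unital C*-subalgebra `B_k(q)` of `B(H_k)` generated by `x_1(q), …, x_k(q)`. -/
noncomputable def Bk (k : ℕ) (x : Fin (k - 1) → (Hk k →L[ℂ] Hk k))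
    (xtop : Hk k →L[ℂ] Hk k) : StarSubalgebra ℂ (Hk k →L[ℂ] Hk k) :=
  (StarAlgebra.adjoin ℂ (Set.range x ∪ {xtop})).topologicalClosure

open Real Filter
open scoped ENNReal

section OpNorm
variable {ι : Type*} [Nonempty ι] [DecidableEq ι]

/-- A continuous linear map on `ℓ²(ι)` sending each basis vector `e_i` to `λ_i • e_{σ i}` with
`σ` injective and `‖λ_i‖ ≤ C` has operator norm at most `C`. -/
lemma aux_opNorm_le (T : lp (fun _ : ι => ℂ) 2 →L[ℂ] lp (fun _ : ι => ℂ) 2)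
    (σ : ι → ι) (hσ : Function.Injective σ) (lam : ι → ℂ) (C : ℝ) (hC : 0 ≤ C)
    (hlam : ∀ i, ‖lam i‖ ≤ C)
    (hT : ∀ i, T (lp.single 2 i 1) = lam i • lp.single 2 (σ i) 1) : ‖T‖ ≤ C := by
  have htp : (0:ℝ) < (2 : ℝ≥0∞).toReal := by norm_num
  have htp2 : (2 : ℝ≥0∞).toReal = ((2:ℕ):ℝ) := by norm_num
  apply T.opNorm_le_bound hC
  intro ψ
  set φ : Finset ι → lp (fun _ : ι => ℂ) 2 := fun s => ∑ i ∈ s, lp.single 2 i (ψ i) with hφ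
  have hsum : HasSum (fun i => lp.single 2 i (ψ i : ℂ)) ψ := lp.hasSum_single (by norm_num) ψ
  set F : ι → ℂ := fun j => ψ (Function.invFun σ j) * lam (Function.invFun σ j) with hF
  have hFσ : ∀ i, F (σ i) = ψ i * lam i := by
    intro i
    simp [hF, Function.leftInverse_invFun hσ i]
  have hbound : ∀ s : Finset ι, ‖T (φ s)‖ ≤ C * ‖φ s‖ := by
    intro s
    have hTφ : T (φ s) = ∑ j ∈ s.image σ, lp.single 2 j (F j) := by
      rw [hφ, map_sum, Finset.sum_image (fun a _ b _ h => hσ h)]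
      refine Finset.sum_congr rfl fun i _ => ?_
      have h1 : lp.single 2 i (ψ i : ℂ) = (ψ i : ℂ) • (lp.single 2 i 1 : lp (fun _ : ι => ℂ) 2) := by
        rw [← lp.single_smul]; simp
      rw [h1, map_smul, hT i, smul_smul, hFσ i, ← lp.single_smul]
      simp
    have h2 : ‖T (φ s)‖ ^ (2:ℝ≥0∞).toReal = ∑ j ∈ s.image σ, ‖F j‖ ^ (2 : ℝ≥0∞).toReal := by
      rw [hTφ]; exact lp.norm_sum_single htp F _
    have h3 : ‖φ s‖ ^ (2:ℝ≥0∞).toReal = ∑ i ∈ s, ‖(ψ i : ℂ)‖ ^ (2:ℝ≥0∞).toReal := by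
      exact lp.norm_sum_single htp (fun i => (ψ i : ℂ)) s
    rw [htp2] at h2 h3
    simp only [Real.rpow_natCast] at h2 h3
    have h4 : ‖T (φ s)‖ ^ 2 ≤ (C * ‖φ s‖) ^ 2 := by
      rw [h2, Finset.sum_image (fun a _ b _ h => hσ h), mul_pow]
      calc ∑ i ∈ s, ‖F (σ i)‖ ^ 2 ≤ ∑ i ∈ s, C^2 * ‖(ψ i : ℂ)‖ ^ 2 := by
            refine Finset.sum_le_sum fun i _ => ?_
            rw [hFσ i, norm_mul, mul_pow]
            have hl2 : ‖lam i‖^2 ≤ C^2 := by nlinarith [norm_nonneg (lam i), hlam i]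
            nlinarith [hl2, sq_nonneg ‖(ψ i : ℂ)‖]
        _ = C^2 * ‖φ s‖^2 := by rw [← Finset.mul_sum, h3]
    have h5 : (0:ℝ) ≤ C * ‖φ s‖ := mul_nonneg hC (norm_nonneg _)
    nlinarith [norm_nonneg (T (φ s))]
  have h0 : Tendsto φ atTop (nhds ψ) := hsum
  have h1 : Tendsto (fun s => ‖T (φ s)‖) atTop (nhds ‖T ψ‖) :=
    ((T.continuous.tendsto ψ).comp h0).norm
  have h2 : Tendsto (fun s => C * ‖φ s‖) atTop (nhds (C * ‖ψ‖)) :=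
    (h0.norm).const_mul C
  exact le_of_tendsto_of_tendsto' h1 h2 hbound

end OpNorm

lemma aux_pow_sub_pow {q q' r : ℝ} (hq0 : 0 ≤ q) (hq'0 : 0 ≤ q')
    (hqr : q ≤ r) (hq'r : q' ≤ r) (hr : r < 1) (n : ℕ) :
    |q ^ n - q' ^ n| ≤ |q - q'| / (1 - r) := by
  have hr0 : 0 ≤ r := hq0.trans hqr
  have h1r : 0 < 1 - r := by linarith
  have key : q ^ n - q' ^ n = (∑ i ∈ Finset.range n, q ^ i * q' ^ (n - 1 - i)) * (q - q') :=
    (geom_sum₂_mul q q' n).symm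
  have hgeom : ∑ i ∈ Finset.range n, r ^ i ≤ 1 / (1 - r) := by
    have heq : (r ^ n - 1) / (r - 1) = (1 - r ^ n) / (1 - r) := by
      rw [← neg_div_neg_eq]; ring_nf
    rw [geom_sum_eq (by intro h; rw [h] at hr; linarith : r ≠ 1) n, heq]
    gcongr
    nlinarith [pow_nonneg hr0 n]
  have hS0 : 0 ≤ ∑ i ∈ Finset.range n, q ^ i * q' ^ (n - 1 - i) :=
    Finset.sum_nonneg fun i _ => mul_nonneg (pow_nonneg hq0 _) (pow_nonneg hq'0 _)
  have hS : ∑ i ∈ Finset.range n, q ^ i * q' ^ (n - 1 - i) ≤ 1 / (1 - r) := by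
    refine le_trans (Finset.sum_le_sum fun i _ => ?_) hgeom
    calc q ^ i * q' ^ (n - 1 - i) ≤ r ^ i * 1 := by
          apply mul_le_mul (pow_le_pow_left₀ hq0 hqr i) (pow_le_one₀ hq'0 (le_trans hq'r hr.le))
            (pow_nonneg hq'0 _) (pow_nonneg hr0 _)
      _ = r ^ i := mul_one _
  rw [key, abs_mul, abs_of_nonneg hS0]
  calc (∑ i ∈ Finset.range n, q ^ i * q' ^ (n - 1 - i)) * |q - q'|
      ≤ (1 / (1 - r)) * |q - q'| := by
        apply mul_le_mul_of_nonneg_right hS (abs_nonneg _)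
    _ = |q - q'| / (1 - r) := by ring

lemma aux_sqrt_sub_sqrt {u v : ℝ} (hu : 0 ≤ u) (hv : 0 ≤ v) :
    |√u - √v| ≤ √|u - v| := by
  have key : ∀ a b : ℝ, 0 ≤ a → 0 ≤ b → b ≤ a → √a - √b ≤ √(a - b) := by
    intro a b ha hb hba
    rw [sub_le_iff_le_add]
    rw [Real.sqrt_le_iff]
    constructor
    · positivity
    · nlinarith [Real.sq_sqrt (sub_nonneg.mpr hba), Real.sq_sqrt hb,
        Real.sqrt_nonneg (a - b), Real.sqrt_nonneg b,
        mul_nonneg (Real.sqrt_nonneg (a-b)) (Real.sqrt_nonneg b)]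
  rcases le_total v u with h | h
  · rw [abs_of_nonneg (sub_nonneg.mpr h), abs_of_nonneg (sub_nonneg.mpr (Real.sqrt_le_sqrt h))]
    exact key u v hu hv h
  · rw [abs_of_nonpos (sub_nonpos.mpr h), abs_of_nonpos (sub_nonpos.mpr (Real.sqrt_le_sqrt h)),
      neg_sub, neg_sub]
    exact key v u hv hu h

lemma aux_coeff_est {q q' : ℝ} (hq : q ∈ Set.Ico (0:ℝ) 1) (hq' : q' ∈ Set.Ico (0:ℝ) 1)
    (s b : ℕ) :
    |q ^ s * √(1 - q ^ b) - q' ^ s * √(1 - q' ^ b)| ≤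
      |q - q'| / (1 - max q q') + √(|q - q'| / (1 - max q q')) := by
  obtain ⟨hq0, hq1⟩ := hq
  obtain ⟨hq'0, hq'1⟩ := hq'
  have hrlt : max q q' < 1 := max_lt hq1 hq'1
  have hpow : ∀ n : ℕ, |q ^ n - q' ^ n| ≤ |q - q'| / (1 - max q q') :=
    fun n => aux_pow_sub_pow hq0 hq'0 (le_max_left _ _) (le_max_right _ _) hrlt n
  set u := |q - q'| / (1 - max q q') with hu
  have hu0 : 0 ≤ u := div_nonneg (abs_nonneg _) (by linarith)
  have hqb : q ^ b ≤ 1 := pow_le_one₀ hq0 hq1.le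
  have hq'b : q' ^ b ≤ 1 := pow_le_one₀ hq'0 hq'1.le
  have hA1 : √(1 - q ^ b) ≤ 1 := Real.sqrt_le_one.mpr (by nlinarith [pow_nonneg hq0 b])
  have hA0 : 0 ≤ √(1 - q ^ b) := Real.sqrt_nonneg _
  have hq's1 : q' ^ s ≤ 1 := pow_le_one₀ hq'0 hq'1.le
  have hq's0 : 0 ≤ q' ^ s := pow_nonneg hq'0 _
  have step1 : |√(1 - q ^ b) - √(1 - q' ^ b)| ≤ √u := by
    refine le_trans (aux_sqrt_sub_sqrt (by linarith) (by linarith)) ?_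
    apply Real.sqrt_le_sqrt
    have : |1 - q ^ b - (1 - q' ^ b)| = |q' ^ b - q ^ b| := by ring_nf
    rw [this, abs_sub_comm]
    exact hpow b
  calc |q ^ s * √(1 - q ^ b) - q' ^ s * √(1 - q' ^ b)|
      = |(q ^ s - q' ^ s) * √(1 - q ^ b) + q' ^ s * (√(1 - q ^ b) - √(1 - q' ^ b))| := by
        ring_nf
    _ ≤ |(q ^ s - q' ^ s) * √(1 - q ^ b)| + |q' ^ s * (√(1 - q ^ b) - √(1 - q' ^ b))| :=
        abs_add_le _ _
    _ ≤ u + √u := by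
        rw [abs_mul, abs_mul, abs_of_nonneg hA0, abs_of_nonneg hq's0]
        have h1 : |q ^ s - q' ^ s| * √(1 - q ^ b) ≤ u * 1 :=
          mul_le_mul (hpow s) hA1 hA0 hu0
        have h2 : q' ^ s * |√(1 - q ^ b) - √(1 - q' ^ b)| ≤ 1 * √u :=
          mul_le_mul hq's1 step1 (abs_nonneg _) zero_le_one
        linarith

lemma aux_contOn {E : Type*} [SeminormedAddCommGroup E] (f : ℝ → E)
    (hf : ∀ q ∈ Set.Ico (0:ℝ) 1, ∀ q' ∈ Set.Ico (0:ℝ) 1,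
      ‖f q - f q'‖ ≤ |q - q'| / (1 - max q q') + √(|q - q'| / (1 - max q q'))) :
    ContinuousOn f (Set.Ico (0:ℝ) 1) := by
  rw [Metric.continuousOn_iff]
  intro q₀ hq₀ ε hε
  obtain ⟨h0, h1⟩ := hq₀
  set r₀ : ℝ := (1 + q₀) / 2 with hr₀def
  have hr₀ : r₀ < 1 := by rw [hr₀def]; linarith
  have h1r₀ : 0 < 1 - r₀ := by linarith
  refine ⟨min ((1 - q₀) / 2) ((1 - r₀) * min (ε / 2) (ε ^ 2 / 4)),
    lt_min (by linarith) (mul_pos h1r₀ (lt_min (by linarith)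
      (div_pos (pow_pos hε 2) (by norm_num)))), ?_⟩
  intro q hq hdist
  obtain ⟨hq0, hq1⟩ := hq
  rw [Real.dist_eq] at hdist
  have hd1 : |q - q₀| < (1 - q₀) / 2 := lt_of_lt_of_le hdist (min_le_left _ _)
  have hd2 : |q - q₀| < (1 - r₀) * min (ε / 2) (ε ^ 2 / 4) :=
    lt_of_lt_of_le hdist (min_le_right _ _)
  have habs := abs_lt.mp hd1
  have hqr : q ≤ r₀ := by rw [hr₀def]; linarith [habs.2]
  have hq₀r : q₀ ≤ r₀ := by rw [hr₀def]; linarith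
  have hmax : max q q₀ ≤ r₀ := max_le hqr hq₀r
  set u := |q - q₀| / (1 - max q q₀) with hu
  have hule : u ≤ |q - q₀| / (1 - r₀) := by
    rw [hu]; gcongr
  have humin : u < min (ε / 2) (ε ^ 2 / 4) := by
    refine lt_of_le_of_lt hule ?_
    rw [div_lt_iff₀ h1r₀]
    calc |q - q₀| < (1 - r₀) * min (ε / 2) (ε ^ 2 / 4) := hd2
      _ = min (ε / 2) (ε ^ 2 / 4) * (1 - r₀) := by ring
  have hu0 : 0 ≤ u := by
    rw [hu]; apply div_nonneg (abs_nonneg _); linarith [le_trans hmax hr₀.le]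
  have h2 : u < ε / 2 := lt_of_lt_of_le humin (min_le_left _ _)
  have h3 : √u < ε / 2 := by
    rw [Real.sqrt_lt' (by linarith)]
    calc u < min (ε / 2) (ε ^ 2 / 4) := humin
      _ ≤ ε ^ 2 / 4 := min_le_right _ _
      _ = (ε / 2) ^ 2 := by ring
  rw [dist_eq_norm]
  calc ‖f q - f q₀‖ ≤ u + √u := hf q ⟨hq0, hq1⟩ q₀ ⟨h0, h1⟩
    _ < ε := by linarith

lemma aux_norm_xl {k : ℕ} {q q' : ℝ} (hq : q ∈ Set.Ico (0:ℝ) 1)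
    (hq' : q' ∈ Set.Ico (0:ℝ) 1) {l : Fin (k - 1)} {T T' : Hk k →L[ℂ] Hk k}
    (hT : IsXl k q l T) (hT' : IsXl k q' l T') :
    ‖T - T'‖ ≤ |q - q'| / (1 - max q q') + √(|q - q'| / (1 - max q q')) := by
  have hrlt : max q q' < 1 := max_lt hq.2 hq'.2
  have hu0 : 0 ≤ |q - q'| / (1 - max q q') := div_nonneg (abs_nonneg _) (by linarith)
  refine aux_opNorm_le (T - T')
    (fun p => (p.1 + 1, p.2 + Pi.single l 1))
    (fun p p' h => ?_)
    (fun p => (((q ^ (∑ i ∈ Finset.Iio l, p.2 i) * √(1 - q ^ (2 * p.2 l + 2)) -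
        q' ^ (∑ i ∈ Finset.Iio l, p.2 i) * √(1 - q' ^ (2 * p.2 l + 2))) : ℝ) : ℂ))
    _ (by positivity) (fun p => ?_) (fun p => ?_)
  · obtain ⟨hm, ha⟩ := Prod.mk.injEq .. ▸ h
    exact Prod.ext (by omega) (add_right_cancel ha)
  · rw [Complex.norm_real, Real.norm_eq_abs]
    exact aux_coeff_est hq hq' _ _
  · obtain ⟨m, a⟩ := p
    have h1 := hT m a
    have h2 := hT' m a
    rw [ContinuousLinearMap.sub_apply]
    show T (ek k (m, a)) - T' (ek k (m, a)) = _
    rw [h1, h2, ← sub_smul, ← Complex.ofReal_sub]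
    rfl

lemma aux_norm_xtop {k : ℕ} {q q' : ℝ} (hq : q ∈ Set.Ico (0:ℝ) 1)
    (hq' : q' ∈ Set.Ico (0:ℝ) 1) {T T' : Hk k →L[ℂ] Hk k}
    (hT : IsXtop k q T) (hT' : IsXtop k q' T') :
    ‖T - T'‖ ≤ |q - q'| / (1 - max q q') + √(|q - q'| / (1 - max q q')) := by
  have hrlt : max q q' < 1 := max_lt hq.2 hq'.2
  have hu0 : 0 ≤ |q - q'| / (1 - max q q') := div_nonneg (abs_nonneg _) (by linarith)
  refine aux_opNorm_le (T - T')
    (fun p => (p.1 + 1, p.2))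
    (fun p p' h => ?_)
    (fun p => (((q ^ (∑ i, p.2 i) - q' ^ (∑ i, p.2 i)) : ℝ) : ℂ))
    _ (by positivity) (fun p => ?_) (fun p => ?_)
  · obtain ⟨hm, ha⟩ := Prod.mk.injEq .. ▸ h
    exact Prod.ext (by omega) ha
  · rw [Complex.norm_real, Real.norm_eq_abs]
    refine le_trans (aux_pow_sub_pow hq.1 hq'.1 (le_max_left _ _) (le_max_right _ _) hrlt _) ?_
    exact le_add_of_nonneg_right (Real.sqrt_nonneg _)
  · obtain ⟨m, a⟩ := p
    have h1 := hT m a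
    have h2 := hT' m a
    rw [ContinuousLinearMap.sub_apply]
    show T (ek k (m, a)) - T' (ek k (m, a)) = _
    rw [h1, h2, ← sub_smul, ← Complex.ofReal_sub]
    rfl

/-- For every integer `k ≥ 1` and each `1 ≤ l ≤ k`, the map `q ↦ x_l(q)` from `[0,1)` to
`B(H_k)` is continuous with respect to the operator norm. -/
theorem stmt_15 (k : ℕ) (hk : 1 ≤ k)
    (x : Fin (k - 1) → ℝ → (Hk k →L[ℂ] Hk k)) (xtop : ℝ → (Hk k →L[ℂ] Hk k))
    (hx : ∀ q ∈ Set.Ico (0 : ℝ) 1, ∀ l, IsXl k q l (x l q))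
    (hxtop : ∀ q ∈ Set.Ico (0 : ℝ) 1, IsXtop k q (xtop q)) :
    (∀ l, ContinuousOn (x l) (Set.Ico (0 : ℝ) 1)) ∧
      ContinuousOn xtop (Set.Ico (0 : ℝ) 1) := by
  constructor
  · intro l
    apply aux_contOn
    intro q hq q' hq'
    exact aux_norm_xl hq hq' (hx q hq l) (hx q' hq' l)
  · apply aux_contOn
    intro q hq q' hq'
    exact aux_norm_xtop hq hq' (hxtop q hq) (hxtop q' hq')
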